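/- Let Γ be a matching graph (maximum degree ≤ 1), let G₁,…,G_n be connected graphs, let P₀ = G₁ × ⋯ × G_n, let H_k be a connected graph on k vertices with k ≥ max_i |V(G_i)|, and let f : V(Γ) → V(P₀) be injective. Then there exists a (6n−3)-piecewise embedding (f̃, {γ_e^i}) of Γ into H_k × P₀ with f̃(v) = (0, f(v)) for every v ∈ V(Γ), where 0 is a fixed vertex of H_k. -/

import Mathlib

open SimpleGraph

/-- `H` is a minor of `G`: there is a model of `H` in `G`, i.e. a family of nonempty,
pairwise-disjoint connected branch sets in `G` indexed by the vertices of `H`, with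
adjacent vertices of `H` having branch sets joined by an edge of `G`. -/
def SimpleGraph.IsMinorOf {V W : Type*} (H : SimpleGraph V) (G : SimpleGraph W) : Prop :=
  ∃ μ : V → Set W,
    (∀ a, (G.induce (μ a)).Connected) ∧
    (Pairwise fun a b => Disjoint (μ a) (μ b)) ∧
    ∀ ⦃a b⦄, H.Adj a b → ∃ x ∈ μ a, ∃ y ∈ μ b, G.Adj x y

/-- A combinatorial embedding of `H` into `G`: vertices map injectively to vertices,
each edge maps to a walk (road) between the images of its endpoints, roads of
non-adjacent edges are vertex-disjoint, and the image of a vertex not lying on an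
edge avoids the road of that edge. -/
structure CombEmbedding {V W : Type*} (H : SimpleGraph V) (G : SimpleGraph W) where
  vmap : V → W
  inj : Function.Injective vmap
  road : ∀ ⦃a b⦄, H.Adj a b → G.Walk (vmap a) (vmap b)
  disj : ∀ ⦃a b c d⦄ (h₁ : H.Adj a b) (h₂ : H.Adj c d),
    a ≠ c → a ≠ d → b ≠ c → b ≠ d →
    ∀ x, x ∈ (road h₁).support → x ∉ (road h₂).support
  iso : ∀ ⦃a b⦄ (h : H.Adj a b) (w : V), w ≠ a → w ≠ b → vmap w ∉ (road h).support

/-- Cartesian (box) product of a family of graphs: two functions are adjacent iff they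
differ in exactly one coordinate, where they are adjacent. -/
def prodGraph {ι : Type*} {V : ι → Type*} (G : ∀ i, SimpleGraph (V i)) :
    SimpleGraph (∀ i, V i) where
  Adj x y := ∃ i, (G i).Adj (x i) (y i) ∧ ∀ j, j ≠ i → x j = y j
  symm := by
    refine ⟨?_⟩
    rintro x y ⟨i, hadj, hj⟩
    exact ⟨i, hadj.symm, fun j hji => (hj j hji).symm⟩
  loopless := by
    refine ⟨?_⟩
    rintro x ⟨i, hadj, -⟩
    exact (G i).ne_of_adj hadj rfl

/-- An `N`-piecewise embedding of `Γ` into `Y`: an injective vertex map together with,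
for each edge, a chain of `N` walks (pieces) whose concatenation joins the images of the
endpoints; pieces with the same index belonging to non-adjacent edges are vertex-disjoint. -/
structure PiecewiseEmbedding {V W : Type*} (Γ : SimpleGraph V) (Y : SimpleGraph W)
    (N : ℕ) where
  vmap : V → W
  inj : Function.Injective vmap
  pt : ∀ ⦃a b⦄, Γ.Adj a b → Fin (N + 1) → W
  pt_first : ∀ ⦃a b⦄ (h : Γ.Adj a b), pt h 0 = vmap a
  pt_last : ∀ ⦃a b⦄ (h : Γ.Adj a b), pt h (Fin.last N) = vmap b
  piece : ∀ ⦃a b⦄ (h : Γ.Adj a b) (i : Fin N), Y.Walk (pt h i.castSucc) (pt h i.succ)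
  disj : ∀ ⦃a b c d⦄ (h₁ : Γ.Adj a b) (h₂ : Γ.Adj c d),
    a ≠ c → a ≠ d → b ≠ c → b ≠ d →
    ∀ (i : Fin N) (x : W), x ∈ (piece h₁ i).support → x ∉ (piece h₂ i).support

namespace PWEAux

open Function

open Classical in
theorem exists_proper' {T : Type*} {L : Type*} {R : Type*} [DecidableEq T]
    (l : T → L) (r : T → R) (D : ℕ) (s : Finset T)
    (hl : ∀ e ∈ s, ∀ t : Finset T, t ⊆ s → (∀ e' ∈ t, l e' = l e) → t.card ≤ D)
    (hr : ∀ e ∈ s, ∀ t : Finset T, t ⊆ s → (∀ e' ∈ t, r e' = r e) → t.card ≤ D) :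
    ∃ m : T → ℕ, (∀ e ∈ s, m e < D) ∧
      (∀ e ∈ s, ∀ e' ∈ s, e ≠ e' → l e = l e' → m e ≠ m e') ∧
      (∀ e ∈ s, ∀ e' ∈ s, e ≠ e' → r e = r e' → m e ≠ m e') := by
  classical
  revert hl hr
  induction s using Finset.induction_on with
  | empty =>
    intro _ _
    exact ⟨fun _ => 0, by simp, by simp, by simp⟩
  | @insert a s ha ih =>
    intro hl hr
    have hsubl : ∀ e ∈ s, ∀ t : Finset T, t ⊆ s → (∀ e' ∈ t, l e' = l e) → t.card ≤ D :=
      fun e he t ht hp => hl e (Finset.mem_insert_of_mem he) t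
        (ht.trans (Finset.subset_insert a s)) hp
    have hsubr : ∀ e ∈ s, ∀ t : Finset T, t ⊆ s → (∀ e' ∈ t, r e' = r e) → t.card ≤ D :=
      fun e he t ht hp => hr e (Finset.mem_insert_of_mem he) t
        (ht.trans (Finset.subset_insert a s)) hp
    obtain ⟨m, hmD, hml, hmr⟩ := ih hsubl hsubr
    -- used color sets
    set Ul : Finset ℕ := (s.filter fun e' => l e' = l a).image m with hUldef
    set Ur : Finset ℕ := (s.filter fun e' => r e' = r a).image m with hUrdef
    have hfl : (s.filter fun e' => l e' = l a).card + 1 ≤ D := by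
      have hanot : a ∉ s.filter fun e' => l e' = l a := fun hx => ha (Finset.mem_of_mem_filter _ hx)
      rw [← Finset.card_insert_of_notMem hanot]
      refine hl a (Finset.mem_insert_self _ _) _ ?_ ?_
      · intro x hx
        rcases Finset.mem_insert.mp hx with h | h
        · subst h; exact Finset.mem_insert_self _ _
        · exact Finset.mem_insert_of_mem (Finset.mem_of_mem_filter _ h)
      · intro x hx
        rcases Finset.mem_insert.mp hx with h | h
        · subst h; rfl
        · exact (Finset.mem_filter.mp h).2
    have hfr : (s.filter fun e' => r e' = r a).card + 1 ≤ D := by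
      have hanot : a ∉ s.filter fun e' => r e' = r a := fun hx => ha (Finset.mem_of_mem_filter _ hx)
      rw [← Finset.card_insert_of_notMem hanot]
      refine hr a (Finset.mem_insert_self _ _) _ ?_ ?_
      · intro x hx
        rcases Finset.mem_insert.mp hx with h | h
        · subst h; exact Finset.mem_insert_self _ _
        · exact Finset.mem_insert_of_mem (Finset.mem_of_mem_filter _ h)
      · intro x hx
        rcases Finset.mem_insert.mp hx with h | h
        · subst h; rfl
        · exact (Finset.mem_filter.mp h).2
    have hUl_lt : Ul.card < D :=
      lt_of_le_of_lt Finset.card_image_le (by omega)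
    have hUr_lt : Ur.card < D :=
      lt_of_le_of_lt Finset.card_image_le (by omega)
    obtain ⟨α, hαD, hαUl⟩ : ∃ α, α < D ∧ α ∉ Ul := by
      have : ¬ (Finset.range D ⊆ Ul) := fun hsub =>
        absurd (Finset.card_le_card hsub) (by rw [Finset.card_range]; omega)
      obtain ⟨α, hα1, hα2⟩ := Finset.not_subset.mp this
      exact ⟨α, Finset.mem_range.mp hα1, hα2⟩
    obtain ⟨β, hβD, hβUr⟩ : ∃ β, β < D ∧ β ∉ Ur := by
      have : ¬ (Finset.range D ⊆ Ur) := fun hsub =>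
        absurd (Finset.card_le_card hsub) (by rw [Finset.card_range]; omega)
      obtain ⟨β, hβ1, hβ2⟩ := Finset.not_subset.mp this
      exact ⟨β, Finset.mem_range.mp hβ1, hβ2⟩
    have memUl : ∀ e ∈ s, l e = l a → m e ∈ Ul := fun e he hle =>
      Finset.mem_image.mpr ⟨e, Finset.mem_filter.mpr ⟨he, hle⟩, rfl⟩
    have memUr : ∀ e ∈ s, r e = r a → m e ∈ Ur := fun e he hre =>
      Finset.mem_image.mpr ⟨e, Finset.mem_filter.mpr ⟨he, hre⟩, rfl⟩
    -- generic finish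
    have finish : ∀ (mm : T → ℕ), (∀ e ∈ s, mm e < D) →
        (∀ e ∈ s, ∀ e' ∈ s, e ≠ e' → l e = l e' → mm e ≠ mm e') →
        (∀ e ∈ s, ∀ e' ∈ s, e ≠ e' → r e = r e' → mm e ≠ mm e') →
        ∀ γ, γ < D → (∀ e ∈ s, l e = l a → mm e ≠ γ) → (∀ e ∈ s, r e = r a → mm e ≠ γ) →
        ∃ m : T → ℕ, (∀ e ∈ insert a s, m e < D) ∧
          (∀ e ∈ insert a s, ∀ e' ∈ insert a s, e ≠ e' → l e = l e' → m e ≠ m e') ∧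
          (∀ e ∈ insert a s, ∀ e' ∈ insert a s, e ≠ e' → r e = r e' → m e ≠ m e') := by
      intro mm hmmD hmml hmmr γ hγD hγl hγr
      refine ⟨Function.update mm a γ, ?_, ?_, ?_⟩
      · intro e he
        rcases Finset.mem_insert.mp he with h | h
        · subst h; rw [Function.update_self]; exact hγD
        · rw [Function.update_of_ne (fun hh : e = a => ha (hh ▸ h))]; exact hmmD e h
      · intro e he e' he' hne hle
        rcases Finset.mem_insert.mp he with h | h <;> rcases Finset.mem_insert.mp he' with h' | h'
        · exact absurd (h.trans h'.symm) hne
        · rw [h] at hle ⊢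
          rw [Function.update_self, Function.update_of_ne (fun hh : e' = a => ha (hh ▸ h'))]
          exact fun hc => (hγl e' h' hle.symm) hc.symm
        · rw [h'] at hle ⊢
          rw [Function.update_of_ne (fun hh : e = a => ha (hh ▸ h)), Function.update_self]
          exact hγl e h hle
        · rw [Function.update_of_ne (fun hh : e = a => ha (hh ▸ h)),
            Function.update_of_ne (fun hh : e' = a => ha (hh ▸ h'))]
          exact hmml e h e' h' hne hle
      · intro e he e' he' hne hre
        rcases Finset.mem_insert.mp he with h | h <;> rcases Finset.mem_insert.mp he' with h' | h'
        · exact absurd (h.trans h'.symm) hne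
        · rw [h] at hre ⊢
          rw [Function.update_self, Function.update_of_ne (fun hh : e' = a => ha (hh ▸ h'))]
          exact fun hc => (hγr e' h' hre.symm) hc.symm
        · rw [h'] at hre ⊢
          rw [Function.update_of_ne (fun hh : e = a => ha (hh ▸ h)), Function.update_self]
          exact hγr e h hre
        · rw [Function.update_of_ne (fun hh : e = a => ha (hh ▸ h)),
            Function.update_of_ne (fun hh : e' = a => ha (hh ▸ h'))]
          exact hmmr e h e' h' hne hre
    by_cases hα2 : α ∉ Ur
    · exact finish m hmD hml hmr α hαD (fun e he hle hc => hαUl (hc ▸ memUl e he hle))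
        (fun e he hre hc => hα2 (hc ▸ memUr e he hre))
    push_neg at hα2
    by_cases hβ2 : β ∉ Ul
    · exact finish m hmD hml hmr β hβD (fun e he hle hc => hβ2 (hc ▸ memUl e he hle))
        (fun e he hre hc => hβUr (hc ▸ memUr e he hre))
    push_neg at hβ2
    -- Kempe chain case : α ∈ Ur, β ∈ Ul
    have hαβ : α ≠ β := fun h => hαUl (h ▸ hβ2)
    obtain ⟨t₀, ht₀f, ht₀α⟩ := Finset.mem_image.mp hα2
    have ht₀s : t₀ ∈ s := (Finset.mem_filter.mp ht₀f).1
    have ht₀r : r t₀ = r a := (Finset.mem_filter.mp ht₀f).2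
    set Rel : T → T → Prop := fun u v => u ∈ s ∧ v ∈ s ∧
      ((m u = α ∧ m v = β ∧ l u = l v) ∨ (m u = β ∧ m v = α ∧ r u = r v)) with hRel
    set Cc : T → Prop := fun v => Relation.ReflTransGen Rel t₀ v with hCc
    have hCt₀ : Cc t₀ := Relation.ReflTransGen.refl
    have hCs : ∀ v, Cc v → v ∈ s := by
      intro v hv
      induction hv with
      | refl => exact ht₀s
      | tail _ h ih => exact h.2.1
    have hCcol : ∀ v, Cc v → m v = α ∨ m v = β := by
      intro v hv
      induction hv with
      | refl => exact Or.inl ht₀α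
      | tail _ h ih =>
        rcases h.2.2 with ⟨_, hv, _⟩ | ⟨_, hv, _⟩
        · exact Or.inr hv
        · exact Or.inl hv
    have hpred : ∀ v, Cc v → v = t₀ ∨ ∃ u, Cc u ∧ Rel u v := fun v hv =>
      Relation.ReflTransGen.cases_tail hv
    -- uniqueness from properness
    have uniq_l : ∀ e ∈ s, ∀ e' ∈ s, l e = l e' → m e = m e' → e = e' := by
      intro e he e' he' hle hme
      by_contra hne
      exact hml e he e' he' hne hle hme
    have uniq_r : ∀ e ∈ s, ∀ e' ∈ s, r e = r e' → m e = m e' → e = e' := by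
      intro e he e' he' hre hme
      by_contra hne
      exact hmr e he e' he' hne hre hme
    have claimβl : ∀ v, Cc v → m v = β → l v = l a → False := by
      intro v hv hβv hlv
      rcases hpred v hv with h | ⟨u, hu, hrel⟩
      · rw [h] at hβv; exact hαβ (ht₀α.symm.trans hβv)
      · rcases hrel.2.2 with ⟨huα, _, hlu⟩ | ⟨_, hvα, _⟩
        · exact hαUl (huα ▸ memUl u hrel.1 (hlu.trans hlv))
        · exact hαβ (hvα.symm.trans hβv)
    -- swapped coloring
    set m₂ : T → ℕ := fun e => if Cc e then (if m e = α then β else α) else m e with hm₂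
    have hm₂C : ∀ e, Cc e → (m e = α → m₂ e = β) ∧ (m e = β → m₂ e = α) := by
      intro e he
      constructor
      · intro h; simp [hm₂, he, h]
      · intro h; simp [hm₂, he, h, hαβ.symm]
    have hm₂N : ∀ e, ¬ Cc e → m₂ e = m e := by intro e he; simp [hm₂, he]
    -- properness of m₂ on s, l-side
    have hl₂ : ∀ e ∈ s, ∀ e' ∈ s, e ≠ e' → l e = l e' → m₂ e ≠ m₂ e' := by
      have key : ∀ e ∈ s, ∀ e' ∈ s, e ≠ e' → l e = l e' → Cc e → ¬ Cc e' → m₂ e ≠ m₂ e' := by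
        intro e he e' he' hne hle hCe hCe'
        rw [hm₂N e' hCe']
        rcases hCcol e hCe with hc | hc
        · rw [(hm₂C e hCe).1 hc]
          intro hc'
          -- m e' = β : then Rel e e' so Cc e'
          exact hCe' (Relation.ReflTransGen.tail hCe ⟨he, he', Or.inl ⟨hc, hc'.symm, hle⟩⟩)
        · rw [(hm₂C e hCe).2 hc]
          intro hc'
          -- m e' = α; predecessor of e
          rcases hpred e hCe with h | ⟨u, hu, hrel⟩
          · rw [h] at hc; exact hαβ (ht₀α.symm.trans hc)
          · rcases hrel.2.2 with ⟨huα, _, hlu⟩ | ⟨_, heα, _⟩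
            · have : u = e' := uniq_l u hrel.1 e' he' (hlu.trans hle) (huα.trans hc')
              exact hCe' (this ▸ hu)
            · exact hαβ (heα.symm.trans hc)
      intro e he e' he' hne hle
      by_cases hCe : Cc e <;> by_cases hCe' : Cc e'
      · rcases hCcol e hCe with hc | hc <;> rcases hCcol e' hCe' with hc' | hc'
        · exact absurd (uniq_l e he e' he' hle (hc.trans hc'.symm)) hne
        · rw [(hm₂C e hCe).1 hc, (hm₂C e' hCe').2 hc']; exact hαβ.symm
        · rw [(hm₂C e hCe).2 hc, (hm₂C e' hCe').1 hc']; exact hαβ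
        · exact absurd (uniq_l e he e' he' hle (hc.trans hc'.symm)) hne
      · exact key e he e' he' hne hle hCe hCe'
      · exact fun hc => key e' he' e he hne.symm hle.symm hCe' hCe hc.symm
      · rw [hm₂N e hCe, hm₂N e' hCe']; exact hml e he e' he' hne hle
    -- properness of m₂ on s, r-side
    have hr₂ : ∀ e ∈ s, ∀ e' ∈ s, e ≠ e' → r e = r e' → m₂ e ≠ m₂ e' := by
      have key : ∀ e ∈ s, ∀ e' ∈ s, e ≠ e' → r e = r e' → Cc e → ¬ Cc e' → m₂ e ≠ m₂ e' := by
        intro e he e' he' hne hre hCe hCe'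
        rw [hm₂N e' hCe']
        rcases hCcol e hCe with hc | hc
        · rw [(hm₂C e hCe).1 hc]
          intro hc'
          -- m e' = β sharing r-class with e (α-colored in C)
          rcases hpred e hCe with h | ⟨u, hu, hrel⟩
          · subst h
            exact hβUr (hc'.symm ▸ memUr e' he' (hre.symm.trans ht₀r))
          · rcases hrel.2.2 with ⟨_, heβ, _⟩ | ⟨huβ, _, hru⟩
            · exact hαβ (hc.symm.trans heβ)
            · have : u = e' := uniq_r u hrel.1 e' he' (hru.trans hre) (huβ.trans hc')
              exact hCe' (this ▸ hu)
        · rw [(hm₂C e hCe).2 hc]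
          intro hc'
          exact hCe' (Relation.ReflTransGen.tail hCe ⟨he, he', Or.inr ⟨hc, hc'.symm, hre⟩⟩)
      intro e he e' he' hne hre
      by_cases hCe : Cc e <;> by_cases hCe' : Cc e'
      · rcases hCcol e hCe with hc | hc <;> rcases hCcol e' hCe' with hc' | hc'
        · exact absurd (uniq_r e he e' he' hre (hc.trans hc'.symm)) hne
        · rw [(hm₂C e hCe).1 hc, (hm₂C e' hCe').2 hc']; exact hαβ.symm
        · rw [(hm₂C e hCe).2 hc, (hm₂C e' hCe').1 hc']; exact hαβ
        · exact absurd (uniq_r e he e' he' hre (hc.trans hc'.symm)) hne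
      · exact key e he e' he' hne hre hCe hCe'
      · exact fun hc => key e' he' e he hne.symm hre.symm hCe' hCe hc.symm
      · rw [hm₂N e hCe, hm₂N e' hCe']; exact hmr e he e' he' hne hre
    have hD₂ : ∀ e ∈ s, m₂ e < D := by
      intro e he
      by_cases hCe : Cc e
      · rcases hCcol e hCe with hc | hc
        · rw [(hm₂C e hCe).1 hc]; exact hβD
        · rw [(hm₂C e hCe).2 hc]; exact hαD
      · rw [hm₂N e hCe]; exact hmD e he
    refine finish m₂ hD₂ hl₂ hr₂ α hαD ?_ ?_
    · intro e he hle hc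
      by_cases hCe : Cc e
      · rcases hCcol e hCe with h | h
        · rw [(hm₂C e hCe).1 h] at hc; exact hαβ hc.symm
        · exact claimβl e hCe h hle
      · rw [hm₂N e hCe] at hc
        exact hαUl (hc ▸ memUl e he hle)
    · intro e he hre hc
      by_cases hCe : Cc e
      · rcases hCcol e hCe with h | h
        · rw [(hm₂C e hCe).1 h] at hc; exact hαβ hc.symm
        · rw [(hm₂C e hCe).2 h] at hc
          exact hβUr (h ▸ memUr e he hre)
      · rw [hm₂N e hCe] at hc
        have : e = t₀ := uniq_r e he t₀ ht₀s (hre.trans ht₀r.symm) (hc.trans ht₀α.symm)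
        exact hCe (this ▸ hCt₀)


universe u v w

theorem exists_chain (nn : ℕ) : ∀ {T : Type u} [Fintype T] [DecidableEq T]
    (V : Fin (nn+1) → Type v) [instV : ∀ i, Fintype (V i)]
    {C : Type v} (c : T → C) (a b : T → ∀ i, V i),
    (Function.Injective fun e => (c e, a e)) → (Function.Injective fun e => (c e, b e)) →
    ∃ (X : ℕ → T → ∀ i, V i) (d : ℕ → Fin (nn+1)),
      X 0 = a ∧ (∀ q, 2*nn+1 ≤ q → X q = b) ∧
      (∀ q, Function.Injective fun e => (c e, X q e)) ∧
      (∀ q (e : T) (j : Fin (nn+1)), j ≠ d q → X q e j = X (q+1) e j) := by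
  induction nn with
  | zero =>
    intro T _ _ V _ C c a b ha hb
    refine ⟨fun q => if q = 0 then a else b, fun _ => 0, by simp, ?_, ?_, ?_⟩
    · intro q hq
      have : ¬ (q = 0) := by omega
      simp [this]
    · intro q; by_cases h : q = 0 <;> simp [h] <;> [exact ha; exact hb]
    · intro q e j hj
      exact absurd (Fin.fin_one_eq_zero j) hj
  | succ k ih =>
    intro T _ _ V _ C c a b ha hb
    rcases isEmpty_or_nonempty T with hT | hT
    · refine ⟨fun _ => a, fun _ => 0, rfl, fun q hq => funext fun e => isEmptyElim e,
        fun q e₁ e₂ _ => isEmptyElim e₁, fun q e => isEmptyElim e⟩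
    -- nonempty T
    have hV0 : Nonempty (V 0) := ⟨a (Classical.arbitrary T) 0⟩
    set D := Fintype.card (V 0) with hD
    obtain ⟨m₀, hm₀D, hm₀l, hm₀r⟩ := exists_proper' (fun e => (c e, Fin.tail (a e)))
      (fun e => (c e, Fin.tail (b e))) D Finset.univ (by
      intro e _ t ht hp
      rw [hD, ← Finset.card_univ]
      refine Finset.card_le_card_of_injOn (fun e' => a e' 0)
        (fun _ _ => Finset.mem_univ _) ?_
      intro e₁ h₁ e₂ h₂ h0eq
      have h₁' := hp e₁ (Finset.mem_coe.mp h₁)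
      have h₂' := hp e₂ (Finset.mem_coe.mp h₂)
      have hc12 : c e₁ = c e₂ := by
        have := congrArg Prod.fst (h₁'.trans h₂'.symm); simpa using this
      have ht12 : Fin.tail (a e₁) = Fin.tail (a e₂) := by
        have := congrArg Prod.snd (h₁'.trans h₂'.symm); simpa using this
      have haa : a e₁ = a e₂ := by
        funext j
        refine Fin.cases ?_ ?_ j
        · exact h0eq
        · intro j'; exact congrFun ht12 j'
      exact ha (show (c e₁, a e₁) = (c e₂, a e₂) by rw [hc12, haa])) (by
      intro e _ t ht hp
      rw [hD, ← Finset.card_univ]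
      refine Finset.card_le_card_of_injOn (fun e' => b e' 0)
        (fun _ _ => Finset.mem_univ _) ?_
      intro e₁ h₁ e₂ h₂ h0eq
      have h₁' := hp e₁ (Finset.mem_coe.mp h₁)
      have h₂' := hp e₂ (Finset.mem_coe.mp h₂)
      have hc12 : c e₁ = c e₂ := by
        have := congrArg Prod.fst (h₁'.trans h₂'.symm); simpa using this
      have ht12 : Fin.tail (b e₁) = Fin.tail (b e₂) := by
        have := congrArg Prod.snd (h₁'.trans h₂'.symm); simpa using this
      have hbb : b e₁ = b e₂ := by
        funext j
        refine Fin.cases ?_ ?_ j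
        · exact h0eq
        · intro j'; exact congrFun ht12 j'
      exact hb (show (c e₁, b e₁) = (c e₂, b e₂) by rw [hc12, hbb]))
    set κ := (Fintype.equivFin (V 0)).symm with hκ
    set m : T → V 0 := fun e => κ ⟨m₀ e, hm₀D e (Finset.mem_univ e)⟩ with hm
    have hminj : ∀ e e', m e = m e' → m₀ e = m₀ e' := by
      intro e e' hme
      have := κ.injective hme
      simpa using congrArg Fin.val this
    have ha' : Function.Injective fun e => ((c e, m e), Fin.tail (a e)) := by
      intro e₁ e₂ h
      have hc12 : c e₁ = c e₂ := congrArg (fun p => p.1.1) h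
      have hm12 : m e₁ = m e₂ := congrArg (fun p => p.1.2) h
      have ht12 : Fin.tail (a e₁) = Fin.tail (a e₂) := congrArg Prod.snd h
      by_contra hne
      exact hm₀l e₁ (Finset.mem_univ _) e₂ (Finset.mem_univ _) hne
        (by rw [hc12, ht12]) (hminj _ _ hm12)
    have hb' : Function.Injective fun e => ((c e, m e), Fin.tail (b e)) := by
      intro e₁ e₂ h
      have hc12 : c e₁ = c e₂ := congrArg (fun p => p.1.1) h
      have hm12 : m e₁ = m e₂ := congrArg (fun p => p.1.2) h
      have ht12 : Fin.tail (b e₁) = Fin.tail (b e₂) := congrArg Prod.snd h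
      by_contra hne
      exact hm₀r e₁ (Finset.mem_univ _) e₂ (Finset.mem_univ _) hne
        (by rw [hc12, ht12]) (hminj _ _ hm12)
    obtain ⟨Xs, ds, hXs0, hXsb, hXsinj, hXsstep⟩ := ih (fun i : Fin (k+1) => V i.succ)
      (fun e => (c e, m e)) (fun e => Fin.tail (a e)) (fun e => Fin.tail (b e)) ha' hb'
    refine ⟨fun q e => if q = 0 then a e else if q ≤ 2*k+2 then
        Fin.cons (m e) (Xs (q-1) e) else b e,
      fun q => if h1 : q = 0 then 0 else if h2 : q ≤ 2*k+1 then (ds (q-1)).succ else 0,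
      by simp, ?_, ?_, ?_⟩
    · intro q hq
      have h1 : ¬ (q = 0) := by omega
      have h2 : ¬ (q ≤ 2*k+2) := by omega
      simp [h1, h2]
    · intro q
      by_cases h1 : q = 0
      · simpa [h1] using ha
      by_cases h2 : q ≤ 2*k+2
      · simp only [h1, h2, if_false, if_true]
        intro e₁ e₂ h
        have hc12 : c e₁ = c e₂ := congrArg Prod.fst h
        have hcons : Fin.cons (m e₁) (Xs (q-1) e₁) = (Fin.cons (m e₂) (Xs (q-1) e₂) :
            ∀ i : Fin (k+2), V i) := congrArg Prod.snd h
        have hm12 : m e₁ = m e₂ := by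
          have := congrFun hcons 0; simpa using this
        have ht12 : Xs (q-1) e₁ = Xs (q-1) e₂ := by
          funext j
          have := congrFun hcons j.succ
          simpa using this
        exact hXsinj (q-1) (show ((c e₁, m e₁), Xs (q-1) e₁) = ((c e₂, m e₂), Xs (q-1) e₂) by
          rw [hc12, hm12, ht12])
      · simp only [h1, h2, if_false]
        intro e₁ e₂ h
        have hc12 : c e₁ = c e₂ := congrArg Prod.fst h
        have hb12 : b e₁ = b e₂ := congrArg Prod.snd h
        exact hb (show (c e₁, b e₁) = (c e₂, b e₂) by rw [hc12, hb12])
    · intro q e j hj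
      by_cases h1 : q = 0
      · subst h1
        have hj0 : j ≠ 0 := by simpa using hj
        obtain ⟨j', rfl⟩ := Fin.eq_succ_of_ne_zero hj0
        have h2 : (1:ℕ) ≤ 2*k+2 := by omega
        simp only [if_pos rfl, if_neg (by omega : ¬ (1:ℕ) = 0), if_pos h2]
        rw [show (1:ℕ)-1 = 0 from rfl, hXs0]
        simp [Fin.cons_succ, Fin.tail]
      by_cases h2 : q ≤ 2*k+1
      · have hq1 : ¬ (q+1 = 0) := by omega
        have hq2 : q+1 ≤ 2*k+2 := by omega
        simp only [dif_neg h1, dif_pos h2] at hj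
        simp only [if_neg h1, if_pos (by omega : q ≤ 2*k+2), if_neg hq1, if_pos hq2]
        rcases eq_or_ne j 0 with hj0 | hj0
        · subst hj0; simp
        · obtain ⟨j', rfl⟩ := Fin.eq_succ_of_ne_zero hj0
          have hj' : j' ≠ ds (q-1) := fun hh => hj (by rw [hh])
          simp only [Fin.cons_succ]
          have := hXsstep (q-1) e j' hj'
          rw [show q-1+1 = q from by omega] at this
          simpa using this
      by_cases h3 : q = 2*k+2
      · subst h3
        simp only [if_neg (by omega : ¬ (2*k+2 = 0)), if_pos (le_refl (2*k+2)),
          if_neg (by omega : ¬ (2*k+2+1 = 0)), if_neg (by omega : ¬ (2*k+2+1 ≤ 2*k+2))]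
        have hj0 : j ≠ 0 := by
          simpa [dif_neg (by omega : ¬ (2*k+2 = 0)),
            dif_neg (by omega : ¬ (2*k+2 ≤ 2*k+1))] using hj
        obtain ⟨j', rfl⟩ := Fin.eq_succ_of_ne_zero hj0
        rw [hXsb (2*k+2-1) (by omega)]
        simp [Fin.cons_succ, Fin.tail]
      · have h4 : ¬ (q ≤ 2*k+2) := by omega
        have h5 : ¬ (q+1 = 0) := by omega
        have h6 : ¬ (q+1 ≤ 2*k+2) := by omega
        simp [h1, h4, h5, h6]


variable {α β : Type*} {G1 : SimpleGraph α} {G2 : SimpleGraph β}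

lemma boxAdjL {u v : α} (h : G1.Adj u v) (x : β) : (G1 □ G2).Adj (u, x) (v, x) :=
  SimpleGraph.boxProd_adj.mpr (Or.inl ⟨h, rfl⟩)

lemma boxAdjR {u v : β} (h : G2.Adj u v) (x : α) : (G1 □ G2).Adj (x, u) (x, v) :=
  SimpleGraph.boxProd_adj.mpr (Or.inr ⟨h, rfl⟩)

lemma prodAdj {n : ℕ} {Vi : Fin n → Type*} {G : ∀ i, SimpleGraph (Vi i)} {i : Fin n}
    {u v : Vi i} (h : (G i).Adj u v) (x : ∀ j, Vi j) :
    (prodGraph G).Adj (Function.update x i u) (Function.update x i v) :=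
  ⟨i, by
    rw [Function.update_self, Function.update_self]
    exact h, fun j hj => by
    rw [Function.update_of_ne hj, Function.update_of_ne hj]⟩

def liftL : {u v : α} → (w : G1.Walk u v) → (x : β) → (G1 □ G2).Walk (u, x) (v, x)
  | _, _, .nil, _ => .nil
  | _, _, .cons h t, x => .cons (boxAdjL h x) (liftL t x)

lemma mem_support_liftL {u v : α} {w : G1.Walk u v} {x : β} {y : α × β}
    (hy : y ∈ (liftL (G2 := G2) w x).support) : ∃ z, y = (z, x) := by
  induction w with
  | nil => simp [liftL] at hy; exact ⟨_, hy⟩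
  | cons h t ih =>
    simp only [liftL, SimpleGraph.Walk.support_cons, List.mem_cons] at hy
    rcases hy with h' | h'
    · exact ⟨_, h'⟩
    · exact ih h'

def liftR : {u v : β} → (w : G2.Walk u v) → (x : α) → (G1 □ G2).Walk (x, u) (x, v)
  | _, _, .nil, _ => .nil
  | _, _, .cons h t, x => .cons (boxAdjR h x) (liftR t x)

lemma mem_support_liftR {u v : β} {w : G2.Walk u v} {x : α} {y : α × β}
    (hy : y ∈ (liftR (G1 := G1) w x).support) : ∃ z, y = (x, z) ∧ z ∈ w.support := by
  induction w with
  | nil =>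
    simp [liftR] at hy
    exact ⟨_, hy, by simp⟩
  | cons h t ih =>
    simp only [liftR, SimpleGraph.Walk.support_cons, List.mem_cons] at hy
    rcases hy with h' | h'
    · exact ⟨_, h', by simp⟩
    · obtain ⟨z, hz1, hz2⟩ := ih h'
      exact ⟨z, hz1, by simp [hz2]⟩

def liftCoord {n : ℕ} {Vi : Fin n → Type*} (G : ∀ i, SimpleGraph (Vi i)) (i : Fin n) :
    {u v : Vi i} → (w : (G i).Walk u v) → (x : ∀ j, Vi j) →
    (prodGraph G).Walk (Function.update x i u) (Function.update x i v)
  | _, _, .nil, _ => .nil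
  | _, _, .cons h t, x => .cons (prodAdj h x) (liftCoord G i t x)

lemma mem_support_liftCoord {n : ℕ} {Vi : Fin n → Type*} {G : ∀ i, SimpleGraph (Vi i)}
    {i : Fin n} {u v : Vi i} {w : (G i).Walk u v} {x : ∀ j, Vi j} {y : ∀ j, Vi j}
    (hy : y ∈ (liftCoord G i w x).support) : ∃ z, y = Function.update x i z := by
  induction w with
  | nil => simp [liftCoord] at hy; exact ⟨_, hy⟩
  | cons h t ih =>
    simp only [liftCoord, SimpleGraph.Walk.support_cons, List.mem_cons] at hy
    rcases hy with h' | h'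
    · exact ⟨_, h'⟩
    · exact ih h'


end PWEAux

open PWEAux

/-- Step 1: every matching graph with prescribed (injective) vertex positions in
P₀ = G₁ × ⋯ × Gₙ admits a (6n-3)-piecewise embedding into H_k × P₀ starting at a
fixed vertex of H_k. -/
theorem matching_piecewise_embedding {V : Type*} (Γ : SimpleGraph V)
    (hmatch : ∀ v, (Γ.neighborSet v).Subsingleton)
    (n : ℕ) (Vi : Fin n → Type*) [∀ i, Fintype (Vi i)]
    (G : ∀ i, SimpleGraph (Vi i)) (hconn : ∀ i, (G i).Connected)
    {Hv : Type*} [Fintype Hv] (Hk : SimpleGraph Hv) (hHkconn : Hk.Connected)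
    (k : ℕ) (hk : Fintype.card Hv = k) (hki : ∀ i, Fintype.card (Vi i) ≤ k)
    (h0 : Hv) (f : V → ∀ i, Vi i) (hf : Function.Injective f) :
    ∃ P : PiecewiseEmbedding Γ (Hk □ prodGraph G) (6 * n - 3),
      ∀ v, P.vmap v = (h0, f v) := by
  classical
  rcases Nat.eq_zero_or_pos n with hn0 | hnpos
  · subst hn0
    have noAdj : ∀ a b : V, ¬ Γ.Adj a b := by
      intro a b hab
      have hab' : a = b := hf (Subsingleton.elim _ _)
      exact Γ.loopless.irrefl a (hab' ▸ hab)
    exact ⟨⟨fun v => (h0, f v),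
      fun u v huv => hf (congrArg Prod.snd huv),
      fun a b h => absurd h (noAdj a b),
      fun a b h => absurd h (noAdj a b),
      fun a b h => absurd h (noAdj a b),
      fun a b h => absurd h (noAdj a b),
      fun a b c dd h₁ => absurd h₁ (noAdj a b)⟩, fun v => rfl⟩
  obtain ⟨nn, rfl⟩ : ∃ m, n = m + 1 := ⟨n - 1, by omega⟩
  set E := {p : V × V // Γ.Adj p.1 p.2} with hE
  have hEinj : Function.Injective (fun e : E => (f e.1.1, f e.1.2)) := by
    intro e₁ e₂ h
    have h1 : e₁.1.1 = e₂.1.1 := hf (congrArg Prod.fst h)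
    have h2 : e₁.1.2 = e₂.1.2 := hf (congrArg Prod.snd h)
    exact Subtype.ext (Prod.ext h1 h2)
  letI : Fintype E := Fintype.ofInjective _ hEinj
  letI : DecidableEq E := Classical.decEq E
  have hA : Function.Injective (fun e : E => (PUnit.unit, f e.1.1)) := by
    intro e₁ e₂ h
    have h1 : e₁.1.1 = e₂.1.1 := hf (congrArg Prod.snd h)
    have h2 : e₁.1.2 = e₂.1.2 := by
      refine hmatch e₁.1.1 ?_ ?_
      · exact e₁.2
      · rw [h1]; exact e₂.2
    exact Subtype.ext (Prod.ext h1 h2)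
  have hB : Function.Injective (fun e : E => (PUnit.unit, f e.1.2)) := by
    intro e₁ e₂ h
    have h2 : e₁.1.2 = e₂.1.2 := hf (congrArg Prod.snd h)
    have h1 : e₁.1.1 = e₂.1.1 := by
      refine hmatch e₁.1.2 ?_ ?_
      · exact e₁.2.symm
      · rw [h2]; exact e₂.2.symm
    exact Subtype.ext (Prod.ext h1 h2)
  obtain ⟨X, d, hX0, hXb, hXinj0, hXstep⟩ := exists_chain nn Vi
    (fun _ : E => PUnit.unit) (fun e => f e.1.1) (fun e => f e.1.2) hA hB
  have hXinj : ∀ q, Function.Injective (X q) := fun q e₁ e₂ h =>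
    hXinj0 q (show (PUnit.unit, X q e₁) = (PUnit.unit, X q e₂) by rw [h])
  set S : ℕ := 2*nn+1 with hS
  have hemb : ∀ i, ∃ g : Vi i → Hv, Function.Injective g := by
    intro i
    have hcard : Fintype.card (Vi i) ≤ Fintype.card Hv := by rw [hk]; exact hki i
    obtain ⟨g⟩ := Function.Embedding.nonempty_of_card_le hcard
    exact ⟨g, g.injective⟩
  choose ψ hψ using hemb
  have walkH : ∀ u v : Hv, Hk.Walk u v := fun u v => (hHkconn.preconnected u v).some
  have walkG : ∀ i (u v : Vi i), (G i).Walk u v := fun i u v => ((hconn i).preconnected u v).some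
  set tag : ℕ → E → Hv := fun q e => ψ (d q) (X q e (d q)) with htag
  set posH : ℕ → E → Hv := fun q e => if 1 ≤ q ∧ q ≤ 2*S then tag ((q-1)/2) e else h0
    with hposH
  set pos : ℕ → E → Hv × (∀ i, Vi i) := fun q e => (posH q e, X (q/2) e) with hposd
  have hwalks : ∀ p : ℕ, ∃ w : ∀ e : E, (Hk □ prodGraph G).Walk (pos p e) (pos (p+1) e),
      ∀ e₁ e₂ : E, e₁ ≠ e₂ → ∀ y, y ∈ (w e₁).support → y ∉ (w e₂).support := by
    intro p
    by_cases hp : p % 2 = 1 ∧ p < 2*S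
    · -- row piece
      have hA1 : (p-1)/2 = p/2 := by omega
      have hA3 : (p+1)/2 = p/2+1 := by omega
      have hc1 : 1 ≤ p ∧ p ≤ 2*S := by omega
      have hc2 : 1 ≤ p+1 ∧ p+1 ≤ 2*S := by omega
      have hH1 : ∀ e, posH p e = tag (p/2) e := by
        intro e; rw [hposH]; simp only []
        rw [if_pos hc1, hA1]
      have hH2 : ∀ e, posH (p+1) e = tag (p/2) e := by
        intro e; rw [hposH]; simp only []
        rw [if_pos hc2]
        congr 1
      refine ⟨fun e => SimpleGraph.Walk.copy
        (liftR (liftCoord G (d (p/2))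
          (walkG (d (p/2)) (X (p/2) e (d (p/2))) (X (p/2+1) e (d (p/2))))
          (X (p/2) e)) (tag (p/2) e)) ?_ ?_, ?_⟩
      · rw [Function.update_eq_self, hposd]
        simp only []
        rw [hH1]
      · rw [hposd]
        simp only []
        rw [hH2, hA3]
        congr 1
        funext j
        by_cases hj : j = d (p/2)
        · subst hj; rw [Function.update_self]
        · rw [Function.update_of_ne hj, hXstep (p/2) e j hj]
      · intro e₁ e₂ hne y hy₁ hy₂
        rw [SimpleGraph.Walk.support_copy] at hy₁ hy₂
        obtain ⟨z₁, hz₁, hz₁m⟩ := mem_support_liftR hy₁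
        obtain ⟨z₂, hz₂, hz₂m⟩ := mem_support_liftR hy₂
        obtain ⟨u₁, hu₁⟩ := mem_support_liftCoord hz₁m
        obtain ⟨u₂, hu₂⟩ := mem_support_liftCoord hz₂m
        apply hne
        apply hXinj (p/2)
        have hfst : tag (p/2) e₁ = tag (p/2) e₂ := by
          have := (hz₁.symm.trans hz₂)
          exact congrArg Prod.fst this
        have hdr : X (p/2) e₁ (d (p/2)) = X (p/2) e₂ (d (p/2)) := by
          apply hψ (d (p/2))
          simpa [htag] using hfst
        have hsnd : Function.update (X (p/2) e₁) (d (p/2)) u₁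
            = Function.update (X (p/2) e₂) (d (p/2)) u₂ := by
          have := congrArg Prod.snd (hz₁.symm.trans hz₂)
          simpa [hu₁, hu₂] using this
        funext j
        by_cases hj : j = d (p/2)
        · subst hj; exact hdr
        · have := congrFun hsnd j
          rwa [Function.update_of_ne hj, Function.update_of_ne hj] at this
    · -- column piece
      have hx : ∀ e, X (p/2) e = X ((p+1)/2) e := by
        intro e
        have hcase : (p+1)/2 = p/2 ∨ (S ≤ p/2 ∧ S ≤ (p+1)/2) := by omega
        rcases hcase with h | h
        · rw [h]
        · rw [hXb (p/2) (by omega), hXb ((p+1)/2) (by omega)]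
      refine ⟨fun e => SimpleGraph.Walk.copy
        (liftL (walkH (posH p e) (posH (p+1) e)) (X (p/2) e)) ?_ ?_, ?_⟩
      · rw [hposd]
      · rw [hposd]
        simp only []
        rw [hx]
      · intro e₁ e₂ hne y hy₁ hy₂
        rw [SimpleGraph.Walk.support_copy] at hy₁ hy₂
        obtain ⟨z₁, hz₁⟩ := mem_support_liftL hy₁
        obtain ⟨z₂, hz₂⟩ := mem_support_liftL hy₂
        apply hne
        apply hXinj (p/2)
        have := congrArg Prod.snd (hz₁.symm.trans hz₂)
        simpa using this
  choose w hw using hwalks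
  have hNS : ¬ (1 ≤ 6*(nn+1)-3 ∧ 6*(nn+1)-3 ≤ 2*S) := by omega
  have hND : (6*(nn+1)-3)/2 ≥ S := by omega
  refine ⟨⟨fun v => (h0, f v),
    fun u v huv => hf (congrArg Prod.snd huv),
    fun a b h i => pos i.val ⟨(a,b), h⟩,
    ?_, ?_,
    fun a b h i => w i.val ⟨(a,b), h⟩,
    ?_⟩, fun v => rfl⟩
  · intro a b h
    show pos ((0 : Fin (6*(nn+1)-3+1)) : ℕ) ⟨(a,b), h⟩ = (h0, f a)
    rw [show ((0 : Fin (6*(nn+1)-3+1)) : ℕ) = 0 by simp]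
    rw [hposd]
    simp only []
    rw [hposH]
    simp only []
    rw [if_neg (by omega : ¬ (1 ≤ 0 ∧ 0 ≤ 2*S)), show (0:ℕ)/2 = 0 from rfl, hX0]
  · intro a b h
    show pos ((Fin.last (6*(nn+1)-3)) : ℕ) ⟨(a,b), h⟩ = (h0, f b)
    rw [show ((Fin.last (6*(nn+1)-3)) : ℕ) = 6*(nn+1)-3 from Fin.val_last _]
    rw [hposd]
    simp only []
    rw [hposH]
    simp only []
    rw [if_neg hNS, hXb _ hND]
  · intro a b c dd h₁ h₂ hac had hbc hbd i y hy₁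
    refine hw i.val ⟨(a,b), h₁⟩ ⟨(c,dd), h₂⟩ ?_ y hy₁
    intro hEq
    exact hac (congrArg (fun t : E => t.1.1) hEq)
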